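/- arXiv:1705.01705 — 2 statements merged into one kernel-verified Lean document; each statement's English description precedes it below -/
import Mathlib

section
/- For every x ∈ S, the Manhattan distance from the normalized objective vector to the normalized ideal vector satisfies ‖y(x) − y_opt‖₁ = Σ_{n=1}^N f_n(x)/L_n − Σ_{n=1}^N ℓ_n/L_n. Consequently, a point x* ∈ S minimizes ‖y(x) − y_opt‖₁ over S if and only if it minimizes the weighted sum Σ_{n=1}^N f_n(x)/L_n over S. (Theorem 5: the minimum Manhattan distance approach is equivalent to the weighted-sum approach.) -/
open Finset

theorem Finset.sum_abs_sub_of_le {ι α : Type*} [AddCommGroup α] [LinearOrder α]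
    [IsOrderedAddMonoid α] (s : Finset ι) {a b : ι → α} (h : ∀ i ∈ s, b i ≤ a i) :
    ∑ i ∈ s, |a i - b i| = ∑ i ∈ s, a i - ∑ i ∈ s, b i := by
  rw [← sum_sub_distrib]
  exact sum_congr rfl fun i hi => abs_of_nonneg (sub_nonneg.mpr (h i hi))

theorem mmd_equiv_weighted_sum_general
    {S : Type*} [Fintype S] [Nonempty S] {N : ℕ}
    (f : Fin N → S → ℝ) (L ℓ : Fin N → ℝ)
    (hLpos : ∀ n, 0 < L n)
    (hℓ : ∀ n, ℓ n = univ.inf' univ_nonempty (f n)) :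
    (∀ x : S, ∑ n, |f n x / L n - ℓ n / L n| =
        ∑ n, f n x / L n - ∑ n, ℓ n / L n) ∧
    (∀ xstar : S,
      (∀ x : S, ∑ n, |f n xstar / L n - ℓ n / L n| ≤ ∑ n, |f n x / L n - ℓ n / L n|) ↔
      (∀ x : S, ∑ n, f n xstar / L n ≤ ∑ n, f n x / L n)) := by
  have manhattan_eq : ∀ x : S, ∑ n, |f n x / L n - ℓ n / L n| =
      ∑ n, f n x / L n - ∑ n, ℓ n / L n := fun x =>
    sum_abs_sub_of_le _ fun n _ =>
      div_le_div_of_nonneg_right (hℓ n ▸ inf'_le (f n) (mem_univ x)) (hLpos n).le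
  refine ⟨manhattan_eq, fun xstar => ?_⟩
  simp only [manhattan_eq, sub_le_sub_iff_right]

/-- Theorem 5: the minimum-Manhattan-distance approach is equivalent to the weighted-sum
approach: `‖y(x) − y_opt‖₁ = ∑ f_n(x)/L_n − ∑ ℓ_n/L_n`, hence the minimizers coincide. -/
theorem mmd_equiv_weighted_sum
    {S : Type*} [Fintype S] [Nonempty S] {N : ℕ}
    (f : Fin N → S → ℝ) (L ℓ : Fin N → ℝ)
    (hL : ∀ n, L n = univ.sup' univ_nonempty (f n) - univ.inf' univ_nonempty (f n))
    (hLpos : ∀ n, 0 < L n)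
    (hℓ : ∀ n, ℓ n = univ.inf' univ_nonempty (f n)) :
    (∀ x : S, ∑ n, |f n x / L n - ℓ n / L n| =
        ∑ n, f n x / L n - ∑ n, ℓ n / L n) ∧
    (∀ xstar : S,
      (∀ x : S, ∑ n, |f n xstar / L n - ℓ n / L n| ≤ ∑ n, |f n x / L n - ℓ n / L n|) ↔
      (∀ x : S, ∑ n, f n xstar / L n ≤ ∑ n, f n x / L n)) :=
  mmd_equiv_weighted_sum_general f L ℓ hLpos hℓ
end

section
/- For a two-objective problem (N = 2) with S mutually nondominated, both extreme solutions attain Manhattan distance exactly 1 from the normalized ideal vector: if x₁ ∈ S minimizes f_1 over S and x₂ ∈ S minimizes f_2 over S, then ‖y(x₁) − y_opt‖₁ = 1 and ‖y(x₂) − y_opt‖₁ = 1. -/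
/-!
For two objectives, mutual nondominance forces the two objectives to be ordered oppositely on
`S`: a minimizer of `f₁` maximizes `f₂`, and vice versa. Hence `ℓ₁ = f₁ x₁`, `L₁ = f₁ x₂ - f₁ x₁`,
`ℓ₂ = f₂ x₂`, `L₂ = f₂ x₁ - f₂ x₂`, so each extreme solution has one normalized coordinate equal
to the ideal one and the other at distance exactly `1` from it.
-/

open Finset

def MutuallyNondominated {S α : Type*} [Preorder α] (f₁ f₂ : S → α) : Prop :=
  ∀ x' x'' : S, x' ≠ x'' →
    ¬ (f₁ x' ≤ f₁ x'' ∧ f₂ x' ≤ f₂ x'' ∧ (f₁ x' < f₁ x'' ∨ f₂ x' < f₂ x''))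

namespace MutuallyNondominated

variable {S α : Type*} [LinearOrder α] {f₁ f₂ : S → α}

theorem symm (h : MutuallyNondominated f₁ f₂) : MutuallyNondominated f₂ f₁ :=
  fun x' x'' hne ⟨h₂, h₁, hlt⟩ => h x' x'' hne ⟨h₁, h₂, hlt.symm⟩

theorem le_of_forall_le {x₀ : S} (h : MutuallyNondominated f₁ f₂) (hmin : ∀ x, f₁ x₀ ≤ f₁ x)
    (x : S) : f₂ x ≤ f₂ x₀ := by
  rcases eq_or_ne x₀ x with rfl | hne
  · exact le_rfl
  · by_contra! hlt
    exact h x₀ x hne ⟨hmin x, hlt.le, Or.inr hlt⟩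

end MutuallyNondominated

namespace Finset

variable {ι α : Type*} [LinearOrder α] {s : Finset ι} {f : ι → α} {i : ι}

theorem sup'_eq_of_forall_le (H : s.Nonempty) (hi : i ∈ s) (h : ∀ j ∈ s, f j ≤ f i) :
    s.sup' H f = f i :=
  le_antisymm (sup'_le H f h) (le_sup' f hi)

theorem inf'_eq_of_forall_le (H : s.Nonempty) (hi : i ∈ s) (h : ∀ j ∈ s, f i ≤ f j) :
    s.inf' H f = f i :=
  le_antisymm (inf'_le f hi) (le_inf' H f h)

end Finset

theorem abs_div_sub_div_sub_self {K : Type*} [Field K] [LinearOrder K] [IsStrictOrderedRing K]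
    {a b : K} (h : a - b ≠ 0) : |a / (a - b) - b / (a - b)| = 1 := by
  rw [div_sub_div_same, div_self h, abs_one]

/-- For a two-objective problem with a mutually nondominated set `S`, both extreme
solutions have Manhattan distance exactly `1` from the normalized ideal vector. -/
theorem extreme_solutions_have_unit_distance
    {S : Type*} [Fintype S] [Nonempty S]
    (f₁ f₂ : S → ℝ)
    (hnd : ∀ x' x'' : S, x' ≠ x'' →
      ¬ (f₁ x' ≤ f₁ x'' ∧ f₂ x' ≤ f₂ x'' ∧ (f₁ x' < f₁ x'' ∨ f₂ x' < f₂ x'')))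
    (L₁ L₂ ℓ₁ ℓ₂ : ℝ)
    (hL₁ : L₁ = univ.sup' univ_nonempty f₁ - univ.inf' univ_nonempty f₁)
    (hL₂ : L₂ = univ.sup' univ_nonempty f₂ - univ.inf' univ_nonempty f₂)
    (hL₁pos : 0 < L₁) (hL₂pos : 0 < L₂)
    (hℓ₁ : ℓ₁ = univ.inf' univ_nonempty f₁)
    (hℓ₂ : ℓ₂ = univ.inf' univ_nonempty f₂)
    (x₁ x₂ : S)
    (hx₁ : ∀ x : S, f₁ x₁ ≤ f₁ x)
    (hx₂ : ∀ x : S, f₂ x₂ ≤ f₂ x) :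
    |f₁ x₁ / L₁ - ℓ₁ / L₁| + |f₂ x₁ / L₂ - ℓ₂ / L₂| = 1 ∧
    |f₁ x₂ / L₁ - ℓ₁ / L₁| + |f₂ x₂ / L₂ - ℓ₂ / L₂| = 1 := by
  have hnd : MutuallyNondominated f₁ f₂ := hnd
  have hmax₂ := hnd.le_of_forall_le hx₁
  have hmax₁ := hnd.symm.le_of_forall_le hx₂
  subst hL₁ hL₂ hℓ₁ hℓ₂
  rw [inf'_eq_of_forall_le _ (mem_univ x₁) fun x _ => hx₁ x,
    inf'_eq_of_forall_le _ (mem_univ x₂) fun x _ => hx₂ x,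
    sup'_eq_of_forall_le _ (mem_univ x₂) fun x _ => hmax₁ x,
    sup'_eq_of_forall_le _ (mem_univ x₁) fun x _ => hmax₂ x] at *
  constructor
  · rw [sub_self, abs_zero, zero_add, abs_div_sub_div_sub_self hL₂pos.ne']
  · rw [sub_self (f₂ x₂ / _), abs_zero, add_zero, abs_div_sub_div_sub_self hL₁pos.ne']
end
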